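/- arXiv:1210.7970 — 4 statements merged into one kernel-verified Lean document; each statement's English description precedes it below -/
import Mathlib

section
/- Let S be a strategy profile of the Max version of the network creation game that is a Max greedy equilibrium and whose induced graph T is a tree of diameter at most 2. If S is not a Max Nash equilibrium, then S is a Cheap Star: T is a star on n ≥ 4 vertices and α < 1/(n−2). -/
open scoped Classical

/-- The simple graph induced by a strategy profile: `{u,v}` is an edge
iff `u ∈ S v` or `v ∈ S u`. -/
def indGraph {V : Type*} (S : V → Finset V) : SimpleGraph V where
  Adj u v := u ≠ v ∧ (u ∈ S v ∨ v ∈ S u)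
  symm := ⟨fun u v h => ⟨h.1.symm, h.2.symm⟩⟩
  loopless := ⟨fun u h => h.1 rfl⟩

/-- A strategy profile is valid if no agent buys an edge to herself,
i.e. `S v ⊆ V \ {v}` for every agent `v`. -/
def ValidProfile {V : Type*} (S : V → Finset V) : Prop := ∀ v, v ∉ S v

/-- Sum-version cost of agent `v`: `α·|S_v| + Σ_w d(v,w)` if the induced graph is
connected, and `∞` otherwise. -/
noncomputable def sumCost {V : Type*} [Fintype V] (α : ℝ) (S : V → Finset V) (v : V) : EReal :=
  if (indGraph S).Connected then
    ((α * (S v).card + ∑ w : V, ((indGraph S).dist v w : ℝ) : ℝ) : EReal)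
  else ⊤

/-- Maximum (shortest-path) distance from `v` to any vertex in the induced graph. -/
noncomputable def maxDist {V : Type*} [Fintype V] (S : V → Finset V) (v : V) : ℕ :=
  Finset.univ.sup fun w : V => (indGraph S).dist v w

/-- Max-version cost of agent `v`: `α·|S_v| + max_w d(v,w)` if the induced graph is
connected, and `∞` otherwise. -/
noncomputable def maxCost {V : Type*} [Fintype V] (α : ℝ) (S : V → Finset V) (v : V) : EReal :=
  if (indGraph S).Connected then
    ((α * (S v).card + (maxDist S v : ℝ) : ℝ) : EReal)
  else ⊤

/-- Pure Nash equilibrium w.r.t. an abstract cost function: no agent can strictly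
decrease her cost by unilaterally replacing her strategy with any other valid set. -/
def isNE {V : Type*} [DecidableEq V] (cost : (V → Finset V) → V → EReal)
    (S : V → Finset V) : Prop :=
  ∀ (v : V) (T : Finset V), v ∉ T →
    ¬ cost (Function.update S v T) v < cost S v

/-- Greedy equilibrium: no agent can strictly decrease her cost by adding a single
vertex to her strategy set, removing a single vertex, or exchanging a single vertex
of her set for another vertex. -/
def isGE {V : Type*} [DecidableEq V] (cost : (V → Finset V) → V → EReal)
    (S : V → Finset V) : Prop :=
  (∀ v x : V, x ≠ v → x ∉ S v →
    ¬ cost (Function.update S v (insert x (S v))) v < cost S v) ∧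
  (∀ v x : V, x ∈ S v →
    ¬ cost (Function.update S v ((S v).erase x)) v < cost S v) ∧
  (∀ v x y : V, x ∈ S v → y ≠ v → y ∉ S v →
    ¬ cost (Function.update S v (insert y ((S v).erase x))) v < cost S v)

/-- `β`-approximate Nash equilibrium: every agent's current cost is at most `β` times
the cost of each (hence of the best) unilateral deviation. -/
def isApproxNE {V : Type*} [DecidableEq V] (β : ℝ)
    (cost : (V → Finset V) → V → EReal) (S : V → Finset V) : Prop :=
  ∀ (v : V) (T : Finset V), v ∉ T →
    cost S v ≤ (β : EReal) * cost (Function.update S v T) v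

/-- Diameter of a graph on a finite vertex set. -/
noncomputable def gdiam {V : Type*} [Fintype V] (G : SimpleGraph V) : ℕ :=
  Finset.univ.sup fun p : V × V => G.dist p.1 p.2

/-- `G` is a star: there is a center adjacent to exactly the other vertices,
and there are no other edges. -/
def IsStar {V : Type*} (G : SimpleGraph V) : Prop :=
  ∃ c : V, ∀ a b : V, G.Adj a b ↔ (a = c ∧ b ≠ c) ∨ (b = c ∧ a ≠ c)

/-- A Cheap Star: a Max greedy equilibrium whose induced graph is a star on
`n ≥ 4` vertices with `α < 1/(n-2)`. -/
def CheapStar {V : Type*} [Fintype V] [DecidableEq V] (α : ℝ) (S : V → Finset V) : Prop :=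
  isGE (maxCost α) S ∧ IsStar (indGraph S) ∧ 4 ≤ Fintype.card V ∧
    α < 1 / ((Fintype.card V : ℝ) - 2)

/-- A Badly Connected Tree: a Max greedy equilibrium whose induced graph is a tree and
in which some agent can strictly decrease her cost by simultaneously exchanging `k > 1`
vertices of her strategy set for `k` other vertices (a multi-swap). -/
def BadlyConnectedTree {V : Type*} [Fintype V] [DecidableEq V] (α : ℝ)
    (S : V → Finset V) : Prop :=
  isGE (maxCost α) S ∧ (indGraph S).IsTree ∧
  ∃ (u : V) (X Y : Finset V), X ⊆ S u ∧ (∀ y ∈ Y, y ≠ u ∧ y ∉ S u) ∧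
    1 < X.card ∧ X.card = Y.card ∧
    maxCost α (Function.update S u ((S u \ X) ∪ Y)) u < maxCost α S u

/-- A Cheap Network: a profile that is a Max greedy equilibrium for every
edge price `α'` with `0 < α' ≤ α`. -/
def CheapNetwork {V : Type*} [Fintype V] [DecidableEq V] (α : ℝ)
    (S : V → Finset V) : Prop :=
  0 < α ∧ ∀ α' : ℝ, 0 < α' → α' ≤ α → isGE (maxCost α') S

section AuxLemmas

open SimpleGraph

variable {V : Type*}

lemma indGraph_adj {S : V → Finset V} {a b : V} :
    (indGraph S).Adj a b ↔ a ≠ b ∧ (a ∈ S b ∨ b ∈ S a) := Iff.rfl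

/-- In a connected graph, two non-adjacent distinct vertices at distance ≤ 2 have a
common neighbor. -/
lemma exists_common_nbr {G : SimpleGraph V} (hc : G.Connected)
    (hd : ∀ u v : V, G.dist u v ≤ 2) {a b : V} (hne : a ≠ b) (hnadj : ¬ G.Adj a b) :
    ∃ m, G.Adj a m ∧ G.Adj m b := by
  have h2 : G.dist a b = 2 := by
    have h0 := hc.pos_dist_of_ne hne
    have h1 : G.dist a b ≠ 1 := fun h => hnadj (SimpleGraph.dist_eq_one_iff_adj.mp h)
    have := hd a b; omega
  obtain ⟨p, hp⟩ := (hc a b).exists_walk_length_eq_dist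
  rw [h2] at hp
  refine ⟨p.getVert 1, ?_, ?_⟩
  · have := p.adj_getVert_succ (i := 0) (by omega)
    simpa using this
  · have := p.adj_getVert_succ (i := 1) (by omega)
    have hb : p.getVert 2 = b := by
      have := p.getVert_length; rw [hp] at this; exact this
    rwa [hb] at this

lemma isPath2 {G : SimpleGraph V} {a b c : V} (h1 : G.Adj a b) (h2 : G.Adj b c)
    (hac : a ≠ c) : (SimpleGraph.Walk.cons h1 (SimpleGraph.Walk.cons h2 SimpleGraph.Walk.nil)).IsPath := by
  simp [SimpleGraph.Walk.isPath_def, h1.ne, h2.ne, hac]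

lemma isPath3 {G : SimpleGraph V} {a b c d : V} (h1 : G.Adj a b) (h2 : G.Adj b c)
    (h3 : G.Adj c d) (hac : a ≠ c) (had : a ≠ d) (hbd : b ≠ d) :
    (SimpleGraph.Walk.cons h1 (SimpleGraph.Walk.cons h2
      (SimpleGraph.Walk.cons h3 SimpleGraph.Walk.nil))).IsPath := by
  simp [SimpleGraph.Walk.isPath_def, h1.ne, h2.ne, h3.ne, hac, had, hbd]

/-- A tree of diameter at most 2 has a center adjacent to all other vertices. -/
lemma exists_center {G : SimpleGraph V} (ht : G.IsTree)
    (hd : ∀ u v : V, G.dist u v ≤ 2) [Nonempty V] :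
    ∃ c : V, ∀ w : V, w ≠ c → G.Adj c w := by
  classical
  have hc := ht.isConnected
  have uniq : ∀ {a b : V} (p q : G.Walk a b), p.IsPath → q.IsPath → p = q := by
    intro a b p q hp hq
    have := ht.IsAcyclic.path_unique ⟨p, hp⟩ ⟨q, hq⟩
    exact congrArg Subtype.val this
  obtain ⟨u⟩ := (inferInstance : Nonempty V)
  by_cases hu : ∀ w : V, w ≠ u → G.Adj u w
  · exact ⟨u, hu⟩
  push_neg at hu
  obtain ⟨x, hxu, hux⟩ := hu
  obtain ⟨m, hum, hmx⟩ := exists_common_nbr hc hd hxu.symm hux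
  refine ⟨m, ?_⟩
  intro y hym
  by_contra hmy
  obtain ⟨z, hmz, hzy⟩ := exists_common_nbr hc hd (Ne.symm hym) hmy
  have hyu : y ≠ u := by
    rintro rfl; exact hmy hum.symm
  by_cases hAuy : G.Adj u y
  · by_cases hzu : z = u
    · subst hzu
      -- Adj u m, Adj m x, ¬Adj u x, Adj u y, ¬Adj m y
      have hxy : x ≠ y := by rintro rfl; exact hmy hmx
      by_cases hAxy : G.Adj x y
      · -- two paths u → x : [u,m,x] and [u,y,x]
        have p1 := isPath2 hum hmx hxu.symm
        have p2 := isPath2 hAuy hAxy.symm hxu.symm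
        have := uniq _ _ p1 p2
        have hsupp := congrArg SimpleGraph.Walk.support this
        simp at hsupp
        exact hym hsupp.symm
      · obtain ⟨t, hxt, hty⟩ := exists_common_nbr hc hd hxy hAxy
        -- two paths x → y : [x,t,y] and [x,m,u,y]
        have p1 := isPath2 hxt hty hxy
        have p2 := isPath3 hmx.symm hum.symm hAuy hxu hxy hym.symm
        have := uniq _ _ p1 p2
        have hlen := congrArg SimpleGraph.Walk.length this
        simp at hlen
    · -- two paths m → y : [m,z,y] and [m,u,y]
      have p1 := isPath2 hmz hzy (Ne.symm hym)
      have p2 := isPath2 hum.symm hAuy (Ne.symm hym)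
      have := uniq _ _ p1 p2
      have hsupp := congrArg SimpleGraph.Walk.support this
      simp at hsupp
      exact hzu hsupp
  · obtain ⟨s, hus, hsy⟩ := exists_common_nbr hc hd hyu.symm hAuy
    have hsm : s ≠ m := by rintro rfl; exact hmy hsy
    have hzu : z ≠ u := by rintro rfl; exact hAuy hzy
    -- two paths m → y : [m,z,y] and [m,u,s,y]
    have p1 := isPath2 hmz hzy (Ne.symm hym)
    have p2 := isPath3 hum.symm hus hsy (Ne.symm hsm) (Ne.symm hym) hyu.symm
    have := uniq _ _ p1 p2
    have hlen := congrArg SimpleGraph.Walk.length this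
    simp at hlen

/-- A tree of diameter at most 2 is a star. -/
lemma isStar_of_tree {G : SimpleGraph V} (ht : G.IsTree)
    (hd : ∀ u v : V, G.dist u v ≤ 2) [Nonempty V] : IsStar G := by
  classical
  obtain ⟨c, hcadj⟩ := exists_center ht hd
  have uniq : ∀ {a b : V} (p q : G.Walk a b), p.IsPath → q.IsPath → p = q := by
    intro a b p q hp hq
    have := ht.IsAcyclic.path_unique ⟨p, hp⟩ ⟨q, hq⟩
    exact congrArg Subtype.val this
  refine ⟨c, fun a b => ⟨fun h => ?_, fun h => ?_⟩⟩
  · by_cases hac : a = c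
    · exact Or.inl ⟨hac, fun hbc => h.ne (hac.trans hbc.symm)⟩
    · by_cases hbc : b = c
      · exact Or.inr ⟨hbc, hac⟩
      · exfalso
        -- triangle a b c: two paths a → b: [a,b] and [a,c,b]
        have p1 : (SimpleGraph.Walk.cons h SimpleGraph.Walk.nil).IsPath := by
          simp [SimpleGraph.Walk.isPath_def, h.ne]
        have p2 := isPath2 (hcadj a hac).symm (hcadj b hbc) h.ne
        have := uniq _ _ p1 p2
        have hlen := congrArg SimpleGraph.Walk.length this
        simp at hlen
  · rcases h with ⟨rfl, hbc⟩ | ⟨rfl, hac⟩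
    · exact hcadj b hbc
    · exact (hcadj a hac).symm

end AuxLemmas

/-- A Max greedy equilibrium on a tree of diameter at most 2 which is not
a Max Nash equilibrium is a Cheap Star. -/
theorem maxGE_diam2_not_NE_is_cheapStar {V : Type*} [Fintype V] [DecidableEq V]
    (α : ℝ) (hα : 0 < α) (S : V → Finset V) (hS : ValidProfile S)
    (hn : 2 ≤ Fintype.card V)
    (hGE : isGE (maxCost α) S) (htree : (indGraph S).IsTree)
    (hdiam : gdiam (indGraph S) ≤ 2)
    (hnotNE : ¬ isNE (maxCost α) S) :
    CheapStar α S := by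
  classical
  haveI : Nontrivial V := Fintype.one_lt_card_iff_nontrivial.mp hn
  have hGconn : (indGraph S).Connected := htree.isConnected
  have hdle : ∀ u v : V, (indGraph S).dist u v ≤ 2 := fun u v =>
    le_trans (Finset.le_sup (f := fun p : V × V => (indGraph S).dist p.1 p.2)
      (Finset.mem_univ (u, v))) hdiam
  obtain ⟨c, hstar⟩ := isStar_of_tree htree hdle
  have hIsStar : IsStar (indGraph S) := ⟨c, hstar⟩
  have hcadj : ∀ w : V, w ≠ c → (indGraph S).Adj c w := fun w hw =>
    (hstar c w).mpr (Or.inl ⟨rfl, hw⟩)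
  have hleafS : ∀ v : V, v ≠ c → ∀ w ∈ S v, w = c := by
    intro v hv w hw
    have hwv : w ≠ v := fun h => hS v (h ▸ hw)
    have hadj : (indGraph S).Adj w v := ⟨hwv, Or.inl hw⟩
    rcases (hstar w v).mp hadj with ⟨rfl, _⟩ | ⟨hvc, _⟩
    · rfl
    · exact absurd hvc hv
  -- no double ownership under greedy equilibrium
  have hnodouble : ∀ v w : V, w ∈ S v → v ∈ S w → False := by
    intro v w hwv hvw
    have hwvne : w ≠ v := fun h => hS v (h ▸ hwv)
    have hgraph : indGraph (Function.update S v ((S v).erase w)) = indGraph S := by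
      ext a b
      simp only [indGraph_adj]
      constructor
      · rintro ⟨h1, h2⟩
        refine ⟨h1, ?_⟩
        rcases h2 with h | h
        · by_cases hb : b = v
          · subst hb; rw [Function.update_self] at h
            exact Or.inl (Finset.mem_of_mem_erase h)
          · rw [Function.update_of_ne hb] at h; exact Or.inl h
        · by_cases ha : a = v
          · subst ha; rw [Function.update_self] at h
            exact Or.inr (Finset.mem_of_mem_erase h)
          · rw [Function.update_of_ne ha] at h; exact Or.inr h
      · rintro ⟨h1, h2⟩
        refine ⟨h1, ?_⟩
        rcases h2 with h | h
        · by_cases hb : b = v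
          · subst hb
            by_cases haw : a = w
            · subst haw
              exact Or.inr (by rw [Function.update_of_ne hwvne]; exact hvw)
            · refine Or.inl ?_
              rw [Function.update_self]
              exact Finset.mem_erase.mpr ⟨haw, h⟩
          · exact Or.inl (by rw [Function.update_of_ne hb]; exact h)
        · by_cases ha : a = v
          · subst ha
            by_cases hbw : b = w
            · subst hbw
              exact Or.inl (by rw [Function.update_of_ne hwvne]; exact hvw)
            · refine Or.inr ?_
              rw [Function.update_self]
              exact Finset.mem_erase.mpr ⟨hbw, h⟩
          · exact Or.inr (by rw [Function.update_of_ne ha]; exact h)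
    have hconn2 : (indGraph (Function.update S v ((S v).erase w))).Connected := by
      rw [hgraph]; exact hGconn
    apply hGE.2.1 v w hwv
    simp only [maxCost]
    rw [if_pos hconn2, if_pos hGconn, EReal.coe_lt_coe_iff]
    have hmd : maxDist (Function.update S v ((S v).erase w)) v = maxDist S v := by
      simp [maxDist, hgraph]
    rw [Function.update_self, hmd, Finset.card_erase_of_mem hwv]
    have h1 : 1 ≤ (S v).card := Finset.card_pos.mpr ⟨w, hwv⟩
    rw [Nat.cast_sub h1]
    push_cast
    nlinarith [hα]
  -- basic lower bound on maxDist
  have hmd_ge1 : ∀ (S' : V → Finset V), (indGraph S').Connected → ∀ v : V,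
      1 ≤ maxDist S' v := by
    intro S' hc' v
    obtain ⟨w, hw⟩ := exists_ne v
    calc 1 ≤ (indGraph S').dist v w := hc'.pos_dist_of_ne (Ne.symm hw)
    _ ≤ _ := Finset.le_sup (Finset.mem_univ w)
  have hnbr : ∀ (S' : V → Finset V), (indGraph S').Connected → ∀ a : V,
      ∃ z, (indGraph S').Adj a z := by
    intro S' hc' a
    obtain ⟨b, hb⟩ := exists_ne a
    obtain ⟨p⟩ := hc' a b
    cases p with
    | nil => exact absurd rfl hb
    | cons h q => exact ⟨_, h⟩
  -- unpack the failed Nash equilibrium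
  simp only [isNE, not_forall, not_not] at hnotNE
  obtain ⟨v, T, hvT, hlt⟩ := hnotNE
  have hconnT : (indGraph (Function.update S v T)).Connected := by
    by_contra hcon
    rw [maxCost, if_neg hcon] at hlt
    exact not_top_lt hlt
  simp only [maxCost] at hlt
  rw [if_pos hconnT, if_pos hGconn, EReal.coe_lt_coe_iff, Function.update_self] at hlt
  have hd'1 : 1 ≤ maxDist (Function.update S v T) v := hmd_ge1 _ hconnT v
  by_cases hvc : v = c
  · -- the deviator is the center: impossible
    exfalso
    subst hvc
    have hTsub : S v ⊆ T := by
      intro l hl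
      have hlc : l ≠ v := fun h => hS v (h ▸ hl)
      have hcl : v ∉ S l := fun h => hnodouble v l hl h
      obtain ⟨z, hnez, hmem⟩ := hnbr _ hconnT l
      rcases hmem with h | h
      · by_cases hzv : z = v
        · subst hzv; rw [Function.update_self] at h; exact h
        · rw [Function.update_of_ne hzv] at h
          exact absurd (hleafS z hzv l h) hlc
      · rw [Function.update_of_ne hlc] at h
        have hzv := hleafS l hlc z h
        subst hzv
        exact absurd h hcl
    have hmdc : maxDist S v = 1 := by
      refine le_antisymm (Finset.sup_le fun w _ => ?_) (hmd_ge1 S hGconn v)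
      by_cases hw : w = v
      · subst hw; simp [SimpleGraph.dist_self]
      · exact le_of_eq (SimpleGraph.dist_eq_one_iff_adj.mpr (hcadj w hw))
    rw [hmdc] at hlt
    have hcard : ((S v).card : ℝ) ≤ T.card := by
      exact_mod_cast Finset.card_le_card hTsub
    have hd'R : (1 : ℝ) ≤ (maxDist (Function.update S v T) v : ℝ) := by
      exact_mod_cast hd'1
    have hmul := mul_le_mul_of_nonneg_left hcard hα.le
    push_cast at hlt
    linarith
  · -- the deviator is a leaf
    have hSv : ∀ w ∈ S v, w = c := hleafS v hvc
    have hSvsub : S v ⊆ {c} := fun w hw => Finset.mem_singleton.mpr (hSv w hw)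
    have hcardSv : (S v).card ≤ 1 := le_trans (Finset.card_le_card hSvsub) (by simp)
    by_cases hdm : maxDist S v ≤ maxDist (Function.update S v T) v
    · -- the deviation buys fewer edges: impossible
      exfalso
      have hTlt : T.card < (S v).card := by
        by_contra hge
        push_neg at hge
        have h1 : ((S v).card : ℝ) ≤ T.card := by exact_mod_cast hge
        have h2 : ((maxDist S v : ℝ)) ≤ maxDist (Function.update S v T) v := by
          exact_mod_cast hdm
        nlinarith [hα.le]
      have hc1 : (S v).card = 1 := by omega
      have hT0 : T = ∅ := Finset.card_eq_zero.mp (by omega)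
      have hSvc : S v = {c} := by
        rcases Finset.subset_singleton_iff.mp hSvsub with h | h
        · rw [h] at hc1; simp at hc1
        · exact h
      obtain ⟨z, hnez, hmem⟩ := hnbr _ hconnT v
      rcases hmem with h | h
      · by_cases hzv : z = v
        · exact hnez hzv.symm
        · rw [Function.update_of_ne hzv] at h
          by_cases hzc : z = c
          · exact hnodouble v c (hSvc ▸ Finset.mem_singleton_self c) (hzc ▸ h)
          · exact hvc (hleafS z hzc v h)
      · rw [Function.update_self, hT0] at h
        exact absurd h (Finset.notMem_empty z)
    · push_neg at hdm
      have hm2 : maxDist S v ≤ 2 := Finset.sup_le fun w _ => hdle v w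
      have hd'eq : maxDist (Function.update S v T) v = 1 := by omega
      have hmeq : maxDist S v = 2 := by omega
      have hAdjAll : ∀ w : V, w ≠ v → (indGraph (Function.update S v T)).Adj v w := by
        intro w hw
        have h1 : (indGraph (Function.update S v T)).dist v w ≤ 1 := by
          rw [← hd'eq]
          exact Finset.le_sup (Finset.mem_univ w)
        have h0 : 0 < (indGraph (Function.update S v T)).dist v w :=
          hconnT.pos_dist_of_ne (Ne.symm hw)
        exact SimpleGraph.dist_eq_one_iff_adj.mp (by omega)
      have hTleaf : ∀ w : V, w ≠ v → w ≠ c → w ∈ T := by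
        intro w hw hwc
        obtain ⟨_, hmem⟩ := hAdjAll w hw
        rcases hmem with h | h
        · rw [Function.update_of_ne hw] at h
          exact absurd (hleafS w hwc v h) hvc
        · rw [Function.update_self] at h; exact h
      have hsubT : (Finset.univ.erase v).erase c ⊆ T := by
        intro w hw
        rw [Finset.mem_erase, Finset.mem_erase] at hw
        exact hTleaf w hw.2.1 hw.1
      have herasecard : ((Finset.univ.erase v).erase c).card = Fintype.card V - 2 := by
        rw [Finset.card_erase_of_mem
            (Finset.mem_erase.mpr ⟨Ne.symm hvc, Finset.mem_univ c⟩),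
          Finset.card_erase_of_mem (Finset.mem_univ v), Finset.card_univ]
        omega
      have hTn2 : Fintype.card V - 2 ≤ T.card := by
        rw [← herasecard]; exact Finset.card_le_card hsubT
      rw [hmeq] at hlt
      rw [hd'eq] at hlt
      -- key inequality
      have hkey : α * ((Fintype.card V : ℝ) - 2) < 1 := by
        have hTn2R : ((Fintype.card V : ℝ)) - 2 ≤ (T.card : ℝ) := by
          have : ((Fintype.card V - 2 : ℕ) : ℝ) ≤ T.card := by exact_mod_cast hTn2
          have h2 : ((Fintype.card V - 2 : ℕ) : ℝ) = (Fintype.card V : ℝ) - 2 := by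
            rw [Nat.cast_sub hn]; norm_num
          linarith [h2 ▸ this]
        by_cases hcv : c ∈ S v
        · have hcT : c ∈ T := by
            obtain ⟨_, hmem⟩ := hAdjAll c (Ne.symm hvc)
            rcases hmem with h | h
            · rw [Function.update_of_ne (Ne.symm hvc)] at h
              exact absurd h (fun h' => hnodouble v c hcv h')
            · rw [Function.update_self] at h; exact h
          have hins : insert c ((Finset.univ.erase v).erase c) ⊆ T :=
            Finset.insert_subset_iff.mpr ⟨hcT, hsubT⟩
          have hinscard : (insert c ((Finset.univ.erase v).erase c)).card
              = Fintype.card V - 2 + 1 := by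
            rw [Finset.card_insert_of_notMem (Finset.notMem_erase c _), herasecard]
          have hn1T : Fintype.card V - 1 ≤ T.card := by
            have := Finset.card_le_card hins
            omega
          have hTn1R : ((Fintype.card V : ℝ)) - 1 ≤ (T.card : ℝ) := by
            have : ((Fintype.card V - 1 : ℕ) : ℝ) ≤ T.card := by exact_mod_cast hn1T
            have h2 : ((Fintype.card V - 1 : ℕ) : ℝ) = (Fintype.card V : ℝ) - 1 := by
              rw [Nat.cast_sub (by omega)]; norm_num
            linarith [h2 ▸ this]
          have hSv1 : (S v).card = 1 :=
            le_antisymm hcardSv (Finset.card_pos.mpr ⟨c, hcv⟩)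
          rw [hSv1] at hlt
          push_cast at hlt
          have hmul := mul_le_mul_of_nonneg_left hTn1R hα.le
          have hring : α * ((Fintype.card V : ℝ) - 2)
              = α * ((Fintype.card V : ℝ) - 1) - α := by ring
          linarith
        · have hSv0 : (S v).card = 0 := by
            rcases Finset.subset_singleton_iff.mp hSvsub with h | h
            · rw [h]; simp
            · exact absurd (h ▸ Finset.mem_singleton_self c : c ∈ S v) hcv
          rw [hSv0] at hlt
          push_cast at hlt
          have hmul := mul_le_mul_of_nonneg_left hTn2R hα.le
          linarith
      -- find a witness leaf at distance 2
      obtain ⟨w, _, hwsup⟩ := Finset.exists_mem_eq_sup Finset.univ Finset.univ_nonempty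
        (fun w => (indGraph S).dist v w)
      have hdvw : (indGraph S).dist v w = 2 := by
        rw [← hwsup]; exact hmeq
      have hwv : w ≠ v := by
        rintro rfl; rw [SimpleGraph.dist_self] at hdvw; omega
      have hwc : w ≠ c := by
        rintro rfl
        rw [SimpleGraph.dist_eq_one_iff_adj.mpr (hcadj v hvc).symm] at hdvw
        omega
      by_cases h4 : 4 ≤ Fintype.card V
      · refine ⟨hGE, hIsStar, h4, ?_⟩
        rw [lt_div_iff₀ (by
          have : (4 : ℝ) ≤ (Fintype.card V : ℝ) := by exact_mod_cast h4
          linarith)]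
        exact hkey
      · -- n = 3 : contradiction with greedy equilibrium (add edge to w)
        exfalso
        have hn3 : 3 ≤ Fintype.card V := by
          have hsub : ({v, c, w} : Finset V) ⊆ Finset.univ := Finset.subset_univ _
          have hcard3 : ({v, c, w} : Finset V).card = 3 := by
            rw [Finset.card_insert_of_notMem (by simp [hvc, hwv.symm]),
              Finset.card_insert_of_notMem (by simp [Ne.symm hwc]), Finset.card_singleton]
          calc 3 = ({v, c, w} : Finset V).card := hcard3.symm
          _ ≤ Finset.univ.card := Finset.card_le_card hsub
          _ = Fintype.card V := Finset.card_univ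
        have hn3' : Fintype.card V = 3 := by omega
        have hα1 : α < 1 := by
          rw [hn3'] at hkey
          norm_num at hkey
          exact hkey
        have hwSv : w ∉ S v := fun h => hwc (hSv w h)
        apply hGE.1 v w hwv hwSv
        have hle : indGraph S ≤ indGraph (Function.update S v (insert w (S v))) := by
          intro a b hab
          obtain ⟨h1, h2⟩ := hab
          refine ⟨h1, ?_⟩
          rcases h2 with h | h
          · left
            by_cases hb : b = v
            · subst hb; rw [Function.update_self]; exact Finset.mem_insert_of_mem h
            · rw [Function.update_of_ne hb]; exact h
          · right
            by_cases ha : a = v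
            · subst ha; rw [Function.update_self]; exact Finset.mem_insert_of_mem h
            · rw [Function.update_of_ne ha]; exact h
        have hconn2 : (indGraph (Function.update S v (insert w (S v)))).Connected :=
          SimpleGraph.Connected.mono hle hGconn
        have huniv3 : ∀ z : V, z = v ∨ z = c ∨ z = w := by
          intro z
          by_contra hz
          push_neg at hz
          obtain ⟨hz1, hz2, hz3⟩ := hz
          have hsub : ({z, v, c, w} : Finset V) ⊆ Finset.univ := Finset.subset_univ _
          have hcard4 : ({z, v, c, w} : Finset V).card = 4 := by
            rw [Finset.card_insert_of_notMem (by simp [hz1, hz2, hz3]),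
              Finset.card_insert_of_notMem (by simp [hvc, hwv.symm]),
              Finset.card_insert_of_notMem (by simp [Ne.symm hwc]), Finset.card_singleton]
          have := Finset.card_le_card hsub
          rw [hcard4, Finset.card_univ, hn3'] at this
          omega
        have hmd2 : maxDist (Function.update S v (insert w (S v))) v ≤ 1 := by
          apply Finset.sup_le
          intro z _
          rcases huniv3 z with rfl | rfl | rfl
          · simp [SimpleGraph.dist_self]
          · exact le_of_eq (SimpleGraph.dist_eq_one_iff_adj.mpr (hle (hcadj v hvc).symm))
          · refine le_of_eq (SimpleGraph.dist_eq_one_iff_adj.mpr ⟨Ne.symm hwv, Or.inr ?_⟩)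
            rw [Function.update_self]; exact Finset.mem_insert_self _ _
        simp only [maxCost]
        rw [if_pos hconn2, if_pos hGconn, EReal.coe_lt_coe_iff, Function.update_self,
          Finset.card_insert_of_notMem hwSv, hmeq]
        have hmd2R : ((maxDist (Function.update S v (insert w (S v))) v : ℕ) : ℝ) ≤ 1 := by
          exact_mod_cast hmd2
        push_cast
        have hring : α * (((S v).card : ℝ) + 1) = α * ((S v).card : ℝ) + α := by ring
        linarith
end

section
/- If a strategy profile of the Max version of the network creation game is a Max greedy equilibrium and its induced graph is a tree of diameter at least 3, then the edge price satisfies α ≥ 1. -/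
open scoped Classical

open SimpleGraph in
/-- Trichotomy for a walk in `G` relative to a bridge edge `s(a,b)`. -/
private lemma bridge_walk_decomp {V : Type*} {G H : SimpleGraph V} {a b : V}
    (hH : H = G \ SimpleGraph.fromEdgeSet {s(a, b)}) (hbr : ¬ H.Reachable a b) :
    ∀ {x y : V} (p : G.Walk x y),
      (H.Reachable x y ∧ H.dist x y ≤ p.length) ∨
      (H.Reachable x a ∧ H.Reachable b y ∧ H.dist x a + 1 + H.dist b y ≤ p.length) ∨
      (H.Reachable x b ∧ H.Reachable a y ∧ H.dist x b + 1 + H.dist a y ≤ p.length) := by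
  intro x y p
  induction p with
  | nil => exact Or.inl ⟨Reachable.refl _, by simp⟩
  | @cons x c y h q ih =>
    by_cases he : s(x, c) = s(a, b)
    · rw [Sym2.eq_iff] at he
      rcases he with ⟨rfl, rfl⟩ | ⟨rfl, rfl⟩
      · -- x = a, c = b
        rcases ih with ⟨hr, hd⟩ | ⟨h1, _h2, _hd⟩ | ⟨_h1, h2, hd⟩
        · exact Or.inr (Or.inl ⟨Reachable.refl _, hr, by
            simp only [SimpleGraph.dist_self, SimpleGraph.Walk.length_cons]; omega⟩)
        · exact absurd h1.symm hbr
        · refine Or.inl ⟨h2, ?_⟩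
          simp only [SimpleGraph.dist_self, SimpleGraph.Walk.length_cons] at hd ⊢
          omega
      · -- x = b, c = a
        rcases ih with ⟨hr, hd⟩ | ⟨h1, h2, hd⟩ | ⟨h1, _h2, _hd⟩
        · exact Or.inr (Or.inr ⟨Reachable.refl _, hr, by
            simp only [SimpleGraph.dist_self, SimpleGraph.Walk.length_cons]; omega⟩)
        · refine Or.inl ⟨h2, ?_⟩
          simp only [SimpleGraph.dist_self, SimpleGraph.Walk.length_cons] at hd ⊢
          omega
        · exact absurd h1 hbr
    · have hxc : H.Adj x c := by
        rw [hH]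
        refine ⟨h, ?_⟩
        rw [SimpleGraph.fromEdgeSet_adj]
        rintro ⟨hm, -⟩
        exact he (Set.mem_singleton_iff.mp hm)
      rcases ih with ⟨hr, hd⟩ | ⟨h1, h2, hd⟩ | ⟨h1, h2, hd⟩
      · refine Or.inl ⟨hxc.reachable.trans hr, ?_⟩
        obtain ⟨w, hw⟩ := hr.exists_walk_length_eq_dist
        have := SimpleGraph.dist_le (SimpleGraph.Walk.cons hxc w)
        simp only [SimpleGraph.Walk.length_cons] at this ⊢
        omega
      · refine Or.inr (Or.inl ⟨hxc.reachable.trans h1, h2, ?_⟩)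
        obtain ⟨w, hw⟩ := h1.exists_walk_length_eq_dist
        have := SimpleGraph.dist_le (SimpleGraph.Walk.cons hxc w)
        simp only [SimpleGraph.Walk.length_cons] at this ⊢
        omega
      · refine Or.inr (Or.inr ⟨hxc.reachable.trans h1, h2, ?_⟩)
        obtain ⟨w, hw⟩ := h1.exists_walk_length_eq_dist
        have := SimpleGraph.dist_le (SimpleGraph.Walk.cons hxc w)
        simp only [SimpleGraph.Walk.length_cons] at this ⊢
        omega

/-- Crossing a bridge: distance decomposes. -/
private lemma bridge_cross {V : Type*} {G H : SimpleGraph V} {a b x y : V}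
    (hH : H = G \ SimpleGraph.fromEdgeSet {s(a, b)}) (hbr : ¬ H.Reachable a b)
    (hxy : G.Reachable x y) (hx : H.Reachable x a) (hy : H.Reachable b y) :
    H.dist x a + 1 + H.dist b y ≤ G.dist x y := by
  obtain ⟨p, hp⟩ := hxy.exists_walk_length_eq_dist
  rcases bridge_walk_decomp hH hbr p with ⟨hr, _⟩ | ⟨_, _, hd⟩ | ⟨_, h2, _⟩
  · exact absurd ((hx.symm.trans hr).trans hy.symm) hbr
  · omega
  · exact absurd (h2.trans hy.symm) hbr

/-- Every vertex is on one of the two sides of a bridge. -/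
private lemma bridge_side {V : Type*} {G H : SimpleGraph V} {a b x : V}
    (hH : H = G \ SimpleGraph.fromEdgeSet {s(a, b)}) (hbr : ¬ H.Reachable a b)
    (hxa : G.Reachable x a) :
    H.Reachable x a ∨ H.Reachable x b := by
  obtain ⟨p, -⟩ := hxa.exists_walk_length_eq_dist
  rcases bridge_walk_decomp hH hbr p with ⟨hr, -⟩ | ⟨h1, -, -⟩ | ⟨h1, -, -⟩
  · exact Or.inl hr
  · exact Or.inl h1
  · exact Or.inr h1

private lemma walk_split_two {V : Type*} {G : SimpleGraph V} {u w : V}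
    (p : G.Walk u w) (h : 2 ≤ p.length) :
    ∃ v1 v2, G.Adj u v1 ∧ G.Adj v1 v2 ∧ ∃ q : G.Walk v2 w, q.length + 2 = p.length := by
  cases p with
  | nil => simp at h
  | cons h1 q =>
    cases q with
    | nil => simp at h
    | cons h2 r =>
      exact ⟨_, _, h1, h2, r, by simp [SimpleGraph.Walk.length_cons]⟩

/-- A Max greedy equilibrium whose induced graph is a tree of diameter at
least 3 has edge price `α ≥ 1`. -/
theorem maxGE_tree_diam3_alpha_ge_one {V : Type*} [Fintype V] [DecidableEq V]
    (α : ℝ) (hα : 0 < α) (S : V → Finset V) (hS : ValidProfile S)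
    (hn : 2 ≤ Fintype.card V)
    (hGE : isGE (maxCost α) S) (htree : (indGraph S).IsTree)
    (hdiam : 3 ≤ gdiam (indGraph S)) :
    1 ≤ α := by
  by_contra hlt
  push_neg at hlt
  classical
  set G := indGraph S with hG
  have hconn : G.Connected := htree.isConnected
  set D := gdiam G with hD
  -- all distances bounded by D
  have hbound : ∀ x y : V, G.dist x y ≤ D := by
    intro x y
    exact Finset.le_sup (f := fun p : V × V => G.dist p.1 p.2) (Finset.mem_univ (x, y))
  haveI : Nonempty V := Fintype.card_pos_iff.mp (by omega)
  -- a pair achieving the diameter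
  obtain ⟨⟨u, w⟩, -, hp⟩ := Finset.exists_mem_eq_sup (Finset.univ : Finset (V × V))
    Finset.univ_nonempty (fun p : V × V => G.dist p.1 p.2)
  have hduw : G.dist u w = D := hp.symm
  have hD3 : 3 ≤ D := hdiam
  -- a shortest walk from u to w
  obtain ⟨pw, hpw⟩ := hconn.exists_walk_length_eq_dist u w
  have hpwlen : 2 ≤ pw.length := by rw [hpw, hduw]; omega
  obtain ⟨v1, v2, h1, h2, q, hq⟩ := walk_split_two pw hpwlen
  have hqlen : q.length + 2 = D := by rw [← hduw, ← hpw]; exact hq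
  -- distance computations
  have hdv2w : G.dist v2 w ≤ D - 2 := by
    have := SimpleGraph.dist_le q
    omega
  have hduv2 : G.dist u v2 ≤ 2 :=
    le_trans (SimpleGraph.dist_le (SimpleGraph.Walk.cons h1 h2.toWalk)) (by simp)
  have htri : G.dist u w ≤ G.dist u v2 + G.dist v2 w := hconn.dist_triangle
  have hduv2' : G.dist u v2 = 2 := by omega
  have hdv2w' : G.dist v2 w = D - 2 := by omega
  have huv1 : u ≠ v1 := h1.ne
  have hduv1 : G.dist u v1 = 1 := by
    have hle1 : G.dist u v1 ≤ 1 := by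
      have := SimpleGraph.dist_le h1.toWalk
      simpa using this
    have hne : G.dist u v1 ≠ 0 := fun h0 => huv1 (hconn.dist_eq_zero_iff.mp h0)
    omega
  have huv2 : u ≠ v2 := by
    intro hh
    rw [← hh, SimpleGraph.dist_self] at hduv2'
    omega
  -- the bridge
  set H := G \ SimpleGraph.fromEdgeSet {s(v1, v2)} with hH
  have hbr : ¬ H.Reachable v1 v2 := by
    have hbridge : G.IsBridge s(v1, v2) :=
      (SimpleGraph.isAcyclic_iff_forall_adj_isBridge.mp htree.IsAcyclic) h2
    exact SimpleGraph.isBridge_iff.mp hbridge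
  have hHG : H ≤ G := sdiff_le
  have hHswap : H = G \ SimpleGraph.fromEdgeSet {s(v2, v1)} := by
    rw [hH, Sym2.eq_swap]
  have hbr' : ¬ H.Reachable v2 v1 := fun hh => hbr hh.symm
  -- u is on the v1 side
  have hu_side : H.Reachable u v1 := by
    rcases bridge_side hH hbr (hconn.preconnected u v1) with hh | hh
    · exact hh
    · exfalso
      have := bridge_cross hHswap hbr' (hconn.preconnected u v1) hh (SimpleGraph.Reachable.refl v1)
      rw [hduv1, SimpleGraph.dist_self] at this
      have h0 : H.dist u v2 = 0 := by omega
      exact huv2 (hh.dist_eq_zero_iff.mp h0)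
  -- w is on the v2 side
  have hw_side : H.Reachable w v2 := by
    rcases bridge_side hH hbr (hconn.preconnected w v1) with hh | hh
    · exfalso
      have hcross := bridge_cross hH hbr (hconn.preconnected w v2) hh
        (SimpleGraph.Reachable.refl v2)
      rw [SimpleGraph.dist_self] at hcross
      have hwv1 : G.dist w v1 ≤ H.dist w v1 := SimpleGraph.Reachable.dist_anti hHG hh
      have htri2 : G.dist u w ≤ G.dist u v1 + G.dist v1 w := hconn.dist_triangle
      have hcw : G.dist v1 w = G.dist w v1 := SimpleGraph.dist_comm ..
      have hcw2 : G.dist w v2 = G.dist v2 w := SimpleGraph.dist_comm ..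
      omega
    · exact hh
  -- key claim: every vertex at distance D from u is within D-2 of v2
  have hkey : ∀ z : V, G.dist u z = D → G.dist v2 z ≤ D - 2 := by
    intro z hz
    have hz_side : H.Reachable z v2 := by
      rcases bridge_side hH hbr (hconn.preconnected z v1) with hh | hh
      · exfalso
        have hcross := bridge_cross hH hbr (hconn.preconnected z w) hh hw_side.symm
        have hzv1 : G.dist z v1 ≤ H.dist z v1 := SimpleGraph.Reachable.dist_anti hHG hh
        have hv2w : G.dist v2 w ≤ H.dist v2 w :=
          SimpleGraph.Reachable.dist_anti hHG hw_side.symm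
        have htri2 : G.dist u z ≤ G.dist u v1 + G.dist v1 z := hconn.dist_triangle
        have hc1 : G.dist v1 z = G.dist z v1 := SimpleGraph.dist_comm ..
        have hzw : G.dist z w ≤ D := hbound z w
        omega
      · exact hh
    have hcross := bridge_cross hH hbr (hconn.preconnected u z) hu_side hz_side.symm
    have huv1H : 1 ≤ H.dist u v1 := by
      have h0 : H.dist u v1 ≠ 0 := fun hh => huv1 (hu_side.dist_eq_zero_iff.mp hh)
      omega
    have hv2z : G.dist v2 z ≤ H.dist v2 z := SimpleGraph.Reachable.dist_anti hHG hz_side.symm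
    omega
  -- the deviation: u buys an edge to v2
  have hv2Su : v2 ∉ S u := by
    intro hmem
    have hadj : G.Adj u v2 := show u ≠ v2 ∧ (u ∈ S v2 ∨ v2 ∈ S u) from ⟨huv2, Or.inr hmem⟩
    have := SimpleGraph.dist_le hadj.toWalk
    simp at this
    omega
  set S' := Function.update S u (insert v2 (S u)) with hS'
  set G2 := indGraph S' with hG2
  have hle : G ≤ G2 := by
    intro a b hab
    show a ≠ b ∧ (a ∈ S' b ∨ b ∈ S' a)
    refine ⟨hab.1, ?_⟩
    rcases hab.2 with hm | hm
    · left
      rcases eq_or_ne b u with rfl | hbu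
      · rw [hS', Function.update_self]
        exact Finset.mem_insert_of_mem hm
      · rwa [hS', Function.update_of_ne hbu]
    · right
      rcases eq_or_ne a u with rfl | hau
      · rw [hS', Function.update_self]
        exact Finset.mem_insert_of_mem hm
      · rwa [hS', Function.update_of_ne hau]
  have hconn2 : G2.Connected := hconn.mono hle
  have hadj2 : G2.Adj u v2 := by
    show u ≠ v2 ∧ (u ∈ S' v2 ∨ v2 ∈ S' u)
    refine ⟨huv2, Or.inr ?_⟩
    rw [hS', Function.update_self]
    exact Finset.mem_insert_self v2 (S u)
  -- maxDist computations
  have hmaxold : maxDist S u = D := by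
    apply le_antisymm
    · exact Finset.sup_le fun z _ => hbound u z
    · rw [← hduw]
      exact Finset.le_sup (f := fun z : V => G.dist u z) (Finset.mem_univ w)
  have hmaxnew : maxDist S' u ≤ D - 1 := by
    apply Finset.sup_le
    intro z _
    rw [← hG2]
    have hz : G.dist u z ≤ D := hbound u z
    have hG2le : G2.dist u z ≤ G.dist u z :=
      SimpleGraph.Reachable.dist_anti hle (hconn.preconnected u z)
    by_cases hcase : G.dist u z = D
    · have hv2z := hkey z hcase
      have htri2 : G2.dist u z ≤ G2.dist u v2 + G2.dist v2 z := hconn2.dist_triangle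
      have h1' : G2.dist u v2 ≤ 1 := by
        have := SimpleGraph.dist_le hadj2.toWalk
        simpa using this
      have h2' : G2.dist v2 z ≤ G.dist v2 z :=
        SimpleGraph.Reachable.dist_anti hle (hconn.preconnected v2 z)
      omega
    · omega
  -- cost comparison
  have hcard : (insert v2 (S u)).card = (S u).card + 1 :=
    Finset.card_insert_of_notMem hv2Su
  have hGE1 := hGE.1 u v2 (fun hh => huv2 hh.symm) hv2Su
  apply hGE1
  rw [maxCost, maxCost, if_pos hconn2, if_pos hconn]
  rw [hmaxold]
  norm_cast
  rw [Function.update_self, hcard]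
  have hm2 : (maxDist S' u : ℝ) ≤ (D : ℝ) - 1 := by
    have : (maxDist S' u : ℝ) ≤ ((D - 1 : ℕ) : ℝ) := by exact_mod_cast hmaxnew
    rw [Nat.cast_sub (by omega)] at this
    simpa using this
  push_cast
  nlinarith [hm2]
end

section
/- Every Cheap Star is a 2-approximate Max Nash equilibrium, and this bound is tight: for every β < 2 there exists a Cheap Star that is not a β-approximate Max Nash equilibrium. -/
open scoped Classical

lemma not_isolated {V : Type*} {G : SimpleGraph V} (h : G.Connected) {u w : V}
    (hne : u ≠ w) (hiso : ∀ x, ¬ G.Adj x w) : False := by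
  obtain ⟨p⟩ := h.preconnected w u
  cases p with
  | nil => exact hne rfl
  | cons h' q => exact hiso _ h'.symm

lemma hub_conn {V : Type*} [Nonempty V] {G : SimpleGraph V} {v : V}
    (h : ∀ w, w ≠ v → G.Adj v w) : G.Connected := by
  have hr : ∀ w, G.Reachable v w := by
    intro w
    by_cases hw : w = v
    · subst hw; exact SimpleGraph.Reachable.refl w
    · exact (h w hw).reachable
  exact ⟨fun a b => (hr a).symm.trans (hr b)⟩

lemma hub_sup {V : Type*} [Fintype V] {G : SimpleGraph V} {v : V}
    (h : ∀ w, w ≠ v → G.Adj v w) (hx : ∃ w : V, w ≠ v) :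
    (Finset.univ.sup fun w : V => G.dist v w) = 1 := by
  apply le_antisymm
  · apply Finset.sup_le
    intro w _
    by_cases hw : w = v
    · subst hw; simp [SimpleGraph.dist_self]
    · exact le_of_eq (SimpleGraph.dist_eq_one_iff_adj.mpr (h w hw))
  · obtain ⟨w, hw⟩ := hx
    calc (1:ℕ) = G.dist v w := (SimpleGraph.dist_eq_one_iff_adj.mpr (h w hw)).symm
    _ ≤ _ := Finset.le_sup (Finset.mem_univ w)

lemma star_hub {V : Type*} {G : SimpleGraph V} {c : V}
    (hc : ∀ a b : V, G.Adj a b ↔ (a = c ∧ b ≠ c) ∨ (b = c ∧ a ≠ c)) :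
    ∀ w, w ≠ c → G.Adj c w := fun w hw => (hc c w).mpr (Or.inl ⟨rfl, hw⟩)

lemma star_sup_leaf {V : Type*} [Fintype V] {G : SimpleGraph V} {c v : V}
    (hc : ∀ a b : V, G.Adj a b ↔ (a = c ∧ b ≠ c) ∨ (b = c ∧ a ≠ c))
    (hv : v ≠ c) (hx : ∃ w : V, w ≠ c ∧ w ≠ v) :
    (Finset.univ.sup fun w : V => G.dist v w) = 2 := by
  have hne : Nonempty V := ⟨v⟩
  have hconn : G.Connected := hub_conn (star_hub hc)
  apply le_antisymm
  · apply Finset.sup_le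
    intro w _
    by_cases hw : w = v
    · subst hw; simp [SimpleGraph.dist_self]
    · by_cases hwc : w = c
      · subst hwc
        have : G.dist v w = 1 :=
          SimpleGraph.dist_eq_one_iff_adj.mpr ((hc v w).mpr (Or.inr ⟨rfl, hv⟩))
        omega
      · have hd := SimpleGraph.dist_le
          (SimpleGraph.Walk.cons ((hc v c).mpr (Or.inr ⟨rfl, hv⟩))
            ((star_hub hc w hwc).toWalk))
        simpa [SimpleGraph.Adj.toWalk] using hd
  · obtain ⟨w, hwc, hwv⟩ := hx
    have hpos : 0 < G.dist v w := hconn.pos_dist_of_ne (Ne.symm hwv)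
    have hne1 : G.dist v w ≠ 1 := by
      intro h1
      rcases (hc v w).mp (SimpleGraph.dist_eq_one_iff_adj.mp h1) with ⟨h,_⟩|⟨h,_⟩
      · exact hv h
      · exact hwc h
    have h2 : 2 ≤ G.dist v w := by omega
    exact h2.trans (Finset.le_sup (Finset.mem_univ w))

lemma exists_third {V : Type*} [Fintype V] (h : 3 ≤ Fintype.card V) (a b : V) :
    ∃ w : V, w ≠ a ∧ w ≠ b := by
  have hsub : ({a, b} : Finset V) ⊆ Finset.univ := Finset.subset_univ _
  have hcard : ({a, b} : Finset V).card ≤ 2 := Finset.card_insert_le _ _ |>.trans (by simp)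
  have : 0 < (Finset.univ \ ({a, b} : Finset V)).card := by
    rw [Finset.card_sdiff_of_subset hsub]
    have : Fintype.card V = Finset.univ.card (α := V) := rfl
    omega
  obtain ⟨w, hw⟩ := Finset.card_pos.mp this
  simp only [Finset.mem_sdiff, Finset.mem_insert, Finset.mem_singleton] at hw
  exact ⟨w, fun h => hw.2 (Or.inl h), fun h => hw.2 (Or.inr h)⟩
-- test chunk 3
lemma maxCost_eq {V : Type*} [Fintype V] (α : ℝ) (S : V → Finset V) (v : V)
    (h : (indGraph S).Connected) :
    maxCost α S v = ((α * (S v).card + (maxDist S v : ℝ) : ℝ) : EReal) := by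
  unfold maxCost; rw [if_pos h]

lemma maxCost_top {V : Type*} [Fintype V] (α : ℝ) (S : V → Finset V) (v : V)
    (h : ¬ (indGraph S).Connected) : maxCost α S v = ⊤ := by
  unfold maxCost; rw [if_neg h]

lemma maxDist_congr {V : Type*} [Fintype V] {S S' : V → Finset V}
    (hg : indGraph S' = indGraph S) (v : V) : maxDist S' v = maxDist S v := by
  unfold maxDist; rw [hg]

lemma indGraph_erase_eq {V : Type*} [DecidableEq V] (S : V → Finset V) {v x : V}
    (hxv : x ≠ v) (hvx : v ∈ S x) :
    indGraph (Function.update S v ((S v).erase x)) = indGraph S := by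
  have key : ∀ a b : V,
      (a ∈ Function.update S v ((S v).erase x) b ∨ b ∈ Function.update S v ((S v).erase x) a)
      ↔ (a ∈ S b ∨ b ∈ S a) := by
    intro a b
    constructor
    · rintro (h | h)
      · by_cases hb : b = v
        · subst hb; rw [Function.update_self] at h
          exact Or.inl (Finset.mem_of_mem_erase h)
        · rw [Function.update_of_ne hb] at h; exact Or.inl h
      · by_cases ha : a = v
        · subst ha; rw [Function.update_self] at h
          exact Or.inr (Finset.mem_of_mem_erase h)
        · rw [Function.update_of_ne ha] at h; exact Or.inr h
    · rintro (h | h)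
      · by_cases hb : b = v
        · subst hb
          by_cases hax : a = x
          · subst hax
            exact Or.inr (by rw [Function.update_of_ne hxv]; exact hvx)
          · exact Or.inl (by rw [Function.update_self]; exact Finset.mem_erase.mpr ⟨hax, h⟩)
        · exact Or.inl (by rw [Function.update_of_ne hb]; exact h)
      · by_cases ha : a = v
        · subst ha
          by_cases hbx : b = x
          · subst hbx
            exact Or.inl (by rw [Function.update_of_ne hxv]; exact hvx)
          · exact Or.inr (by rw [Function.update_self]; exact Finset.mem_erase.mpr ⟨hbx, h⟩)
        · exact Or.inr (by rw [Function.update_of_ne ha]; exact h)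
  ext a b
  exact ⟨fun ⟨h1, h2⟩ => ⟨h1, (key a b).mp h2⟩, fun ⟨h1, h2⟩ => ⟨h1, (key a b).mpr h2⟩⟩

lemma no_double {V : Type*} [Fintype V] [DecidableEq V] {α : ℝ} (hα : 0 < α)
    {S : V → Finset V} (hvalid : ValidProfile S) (hGE : isGE (maxCost α) S)
    (hconn : (indGraph S).Connected) {v x : V} (hx : x ∈ S v) (hvx : v ∈ S x) : False := by
  have hxv : x ≠ v := fun h => hvalid v (h ▸ hx)
  have hg := indGraph_erase_eq S hxv hvx
  have hconn' : (indGraph (Function.update S v ((S v).erase x))).Connected := by rw [hg]; exact hconn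
  refine hGE.2.1 v x hx ?_
  rw [maxCost_eq _ _ _ hconn', maxCost_eq _ _ _ hconn, maxDist_congr hg,
    Function.update_self, Finset.card_erase_of_mem hx]
  rw [EReal.coe_lt_coe_iff]
  have hcard : 1 ≤ (S v).card := Finset.card_pos.mpr ⟨x, hx⟩
  have : ((S v).card - 1 : ℕ) = ((S v).card : ℝ) - 1 := by
    push_cast [hcard]; ring
  rw [this]
  nlinarith
lemma part1 {V : Type} [Fintype V] [DecidableEq V] (α : ℝ) (S : V → Finset V)
    (hα : 0 < α) (hvalid : ValidProfile S) (hCS : CheapStar α S) :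
    isApproxNE 2 (maxCost α) S := by
  obtain ⟨hGE, ⟨c, hc⟩, hcard, _⟩ := hCS
  intro v T hvT
  by_cases hconn' : (indGraph (Function.update S v T)).Connected
  swap
  · rw [maxCost_top _ _ _ hconn', EReal.mul_top_of_pos (by norm_num : (0:EReal) < ((2:ℝ) : EReal))]
    exact le_top
  · have hne : Nonempty V := Fintype.card_pos_iff.mp (by omega)
    have hconn : (indGraph S).Connected := hub_conn (star_hub hc)
    rw [maxCost_eq _ _ _ hconn, maxCost_eq _ _ _ hconn', Function.update_self]
    have hd' : 1 ≤ maxDist (Function.update S v T) v := by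
      obtain ⟨w, hw⟩ := Fintype.exists_ne_of_one_lt_card (by omega) v
      have hpos : 0 < (indGraph (Function.update S v T)).dist v w :=
        hconn'.pos_dist_of_ne (Ne.symm hw)
      have hle : (indGraph (Function.update S v T)).dist v w ≤ maxDist (Function.update S v T) v := by
        unfold maxDist; exact Finset.le_sup (Finset.mem_univ w)
      omega
    rw [← EReal.coe_mul, EReal.coe_le_coe_iff]
    have hd'R : (1:ℝ) ≤ (maxDist (Function.update S v T) v : ℝ) := by exact_mod_cast hd'
    have hTnn : (0:ℝ) ≤ (T.card : ℝ) := Nat.cast_nonneg _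
    by_cases hvc : v = c
    · subst hvc
      have hms : maxDist S v = 1 := by
        unfold maxDist
        exact hub_sup (star_hub hc) (Fintype.exists_ne_of_one_lt_card (by omega) v)
      have hsub : S v ⊆ T := by
        intro x hxSc
        have hxc : x ≠ v := fun h => hvalid v (h ▸ hxSc)
        have hcx : v ∉ S x := fun h => no_double hα hvalid hGE hconn hxSc h
        by_contra hxT
        refine not_isolated (w := x) hconn' (Ne.symm hxc) ?_
        rintro u ⟨hune, hmem⟩
        rcases hmem with h | h
        · rw [Function.update_of_ne hxc] at h
          rcases (hc u x).mp ⟨hune, Or.inl h⟩ with ⟨h1, _⟩ | ⟨h1, _⟩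
          · exact hcx (h1 ▸ h)
          · exact hxc h1
        · by_cases huc : u = v
          · subst huc; rw [Function.update_self] at h; exact hxT h
          · rw [Function.update_of_ne huc] at h
            rcases (hc u x).mp ⟨hune, Or.inr h⟩ with ⟨h1, _⟩ | ⟨h1, _⟩
            · exact huc h1
            · exact hxc h1
      have hcardle : ((S v).card : ℝ) ≤ (T.card : ℝ) :=
        Nat.cast_le.mpr (Finset.card_le_card hsub)
      rw [hms]
      push_cast
      nlinarith [mul_le_mul_of_nonneg_left hcardle hα.le]
    · have hms : maxDist S v = 2 := by
        unfold maxDist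
        exact star_sup_leaf hc hvc (exists_third (by omega) c v)
      rw [hms]
      have hsub : S v ⊆ {c} := by
        intro x hx
        have hxv : x ≠ v := fun h => hvalid v (h ▸ hx)
        rcases (hc x v).mp ⟨hxv, Or.inl hx⟩ with ⟨h1, _⟩ | ⟨h1, _⟩
        · exact Finset.mem_singleton.mpr h1
        · exact absurd h1 hvc
      by_cases hSv : S v = ∅
      · rw [hSv]
        simp only [Finset.card_empty, Nat.cast_zero]
        push_cast
        nlinarith [mul_nonneg hα.le hTnn]
      · have hcSv : c ∈ S v := by
          obtain ⟨x, hx⟩ := Finset.nonempty_iff_ne_empty.mpr hSv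
          have := hsub hx
          rwa [Finset.mem_singleton.mp this] at hx
        have hvSc : v ∉ S c := fun h => no_double hα hvalid hGE hconn hcSv h
        have hSveq : S v = {c} := Finset.Subset.antisymm hsub (Finset.singleton_subset_iff.mpr hcSv)
        have hTne : T.Nonempty := by
          rw [Finset.nonempty_iff_ne_empty]
          intro hTe
          refine not_isolated (w := v) hconn' (fun h => hvc h.symm : c ≠ v) ?_
          rintro u ⟨hune, hmem⟩
          rcases hmem with h | h
          · rw [Function.update_self, hTe] at h; exact absurd h (Finset.notMem_empty u)
          · rw [Function.update_of_ne hune] at h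
            rcases (hc u v).mp ⟨hune, Or.inr h⟩ with ⟨h1, h2⟩ | ⟨h1, _⟩
            · exact hvSc (h1 ▸ h)
            · exact hvc h1
        have hT1 : (1:ℝ) ≤ (T.card : ℝ) := by
          exact_mod_cast Finset.card_pos.mpr hTne
        rw [hSveq]
        simp only [Finset.card_singleton, Nat.cast_one]
        push_cast
        nlinarith [mul_le_mul_of_nonneg_left hT1 hα.le]
def S₄ : Fin 4 → Finset (Fin 4) := fun i => if i = 0 then {1,2,3} else ∅

lemma S₄_star : ∀ a b : Fin 4, (indGraph S₄).Adj a b ↔ (a = 0 ∧ b ≠ 0) ∨ (b = 0 ∧ a ≠ 0) := by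
  have h : ∀ a b : Fin 4, (a ≠ b ∧ (a ∈ S₄ b ∨ b ∈ S₄ a)) ↔ (a = 0 ∧ b ≠ 0) ∨ (b = 0 ∧ a ≠ 0) := by
    decide
  exact h

lemma S₄_conn : (indGraph S₄).Connected := hub_conn (star_hub S₄_star)

lemma S₄_GE (α : ℝ) (hα : 0 < α) : isGE (maxCost α) S₄ := by
  refine ⟨?_, ?_, ?_⟩
  · intro v x hxv hxS
    by_cases hv0 : v = 0
    · subst hv0; exfalso; fin_cases x <;> simp_all [S₄]
    · have hSv : S₄ v = ∅ := by simp [S₄, hv0]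
      by_cases hco : (indGraph (Function.update S₄ v (insert x (S₄ v)))).Connected
      · rw [maxCost_eq _ _ _ hco, maxCost_eq _ _ _ S₄_conn, Function.update_self]
        have hms : maxDist S₄ v = 2 := by
          unfold maxDist
          exact star_sup_leaf S₄_star hv0 (exists_third (by simp) 0 v)
        obtain ⟨w, hw0, hwv, hwx⟩ : ∃ w : Fin 4, w ≠ 0 ∧ w ≠ v ∧ w ≠ x := by
          revert hv0; revert hxv; fin_cases v <;> fin_cases x <;> decide
        have hnadj : ¬ (indGraph (Function.update S₄ v (insert x (S₄ v)))).Adj v w := by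
          rintro ⟨hne, hmem⟩
          rcases hmem with h | h
          · rw [Function.update_of_ne hwv] at h; simp [S₄, hw0] at h
          · rw [Function.update_self, hSv] at h
            simp only [Finset.mem_insert, Finset.notMem_empty, or_false] at h
            exact hwx (h ▸ rfl)
        have hpos : 0 < (indGraph (Function.update S₄ v (insert x (S₄ v)))).dist v w :=
          hco.pos_dist_of_ne (Ne.symm hwv)
        have hne1 : (indGraph (Function.update S₄ v (insert x (S₄ v)))).dist v w ≠ 1 :=
          fun h => hnadj (SimpleGraph.dist_eq_one_iff_adj.mp h)
        have hle : (indGraph (Function.update S₄ v (insert x (S₄ v)))).dist v w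
            ≤ maxDist (Function.update S₄ v (insert x (S₄ v))) v := by
          unfold maxDist; exact Finset.le_sup (Finset.mem_univ w)
        have hd2 : 2 ≤ maxDist (Function.update S₄ v (insert x (S₄ v))) v := by omega
        have hd2R : (2:ℝ) ≤ (maxDist (Function.update S₄ v (insert x (S₄ v))) v : ℝ) := by
          exact_mod_cast hd2
        rw [hSv] at hd2R
        rw [hms, hSv]
        rw [EReal.coe_lt_coe_iff, not_lt]
        rw [show (insert x (∅ : Finset (Fin 4))).card = 1 from by simp]
        simp only [Finset.card_empty]
        push_cast
        linarith
      · rw [maxCost_top _ _ _ hco]; exact not_top_lt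
  · intro v x hx
    by_cases hv0 : v = 0
    · subst hv0
      have hx0 : x ≠ 0 := by intro h; subst h; simp [S₄] at hx
      have hdisc : ¬ (indGraph (Function.update S₄ 0 ((S₄ 0).erase x))).Connected := by
        intro hco
        refine not_isolated (w := x) hco (Ne.symm hx0) ?_
        rintro u ⟨hune, hmem⟩
        rcases hmem with h | h
        · rw [Function.update_of_ne hx0] at h; simp [S₄, hx0] at h
        · by_cases hu0 : u = 0
          · subst hu0; rw [Function.update_self] at h
            exact Finset.notMem_erase x _ h
          · rw [Function.update_of_ne hu0] at h; simp [S₄, hu0] at h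
      rw [maxCost_top _ _ _ hdisc]; exact not_top_lt
    · exfalso; simp [S₄, hv0] at hx
  · intro v x y hx hy0 hyS
    by_cases hv0 : v = 0
    · subst hv0; exfalso; fin_cases y <;> simp_all [S₄]
    · exfalso; simp [S₄, hv0] at hx
lemma part2 (β : ℝ) (hβ1 : 1 ≤ β) (hβ2 : β < 2) :
    ∃ (n : ℕ) (α : ℝ) (S : Fin n → Finset (Fin n)),
      0 < α ∧ ValidProfile S ∧ CheapStar α S ∧ ¬ isApproxNE β (maxCost α) S := by
  set X := (2 - β)/(3*β) with hXdef
  have hX : 0 < X := div_pos (by linarith) (by linarith)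
  set α := min X (1/2) / 2 with hαdef
  have hmin : 0 < min X (1/2) := lt_min hX (by norm_num)
  have hα : 0 < α := by positivity
  have hαX : α < X := by
    have h1 := min_le_left X (1/2)
    simp only [hαdef]; linarith
  have hα2 : α < 1/2 := by
    have h1 := min_le_right X (1/2)
    simp only [hαdef]; linarith
  have hcard4 : (Fintype.card (Fin 4) : ℝ) - 2 = 2 := by
    simp [Fintype.card_fin]; norm_num
  refine ⟨4, α, S₄, hα, (show ∀ v : Fin 4, v ∉ S₄ v by decide : ValidProfile S₄),
    ⟨S₄_GE α hα, ⟨0, S₄_star⟩, by simp, by rw [hcard4]; linarith⟩, ?_⟩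
  intro hA
  have h := hA 1 {0,2,3} (by decide)
  have hms1 : maxDist S₄ 1 = 2 := by
    unfold maxDist
    exact star_sup_leaf S₄_star (by decide) (exists_third (by simp) 0 1)
  have hS41 : S₄ 1 = ∅ := by decide
  have hhub : ∀ w : Fin 4, w ≠ 1 → (indGraph (Function.update S₄ 1 ({0,2,3} : Finset (Fin 4)))).Adj 1 w := by
    intro w hw
    refine ⟨Ne.symm hw, Or.inr ?_⟩
    rw [Function.update_self]
    fin_cases w <;> simp_all <;> decide
  have hconn' := hub_conn hhub
  have hmd' : maxDist (Function.update S₄ 1 ({0,2,3} : Finset (Fin 4))) 1 = 1 := by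
    unfold maxDist
    exact hub_sup hhub ⟨0, by decide⟩
  have hcardN : (({0,2,3} : Finset (Fin 4)).card) = 3 := by decide
  rw [maxCost_eq _ _ _ S₄_conn, maxCost_eq _ _ _ hconn', Function.update_self,
    hms1, hmd', hS41, hcardN] at h
  rw [← EReal.coe_mul, EReal.coe_le_coe_iff] at h
  simp only [Finset.card_empty, Nat.cast_zero, Nat.cast_one, Nat.cast_ofNat] at h
  have hkey : α * (3*β) < 2 - β := (lt_div_iff₀ (by linarith)).mp hαX
  nlinarith

/-- Every Cheap Star is a 2-approximate Max Nash equilibrium, and the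
bound is tight: for every `β < 2` some Cheap Star is not a `β`-approximate Max Nash
equilibrium. -/
theorem cheapStar_two_approx_and_tight :
    (∀ (V : Type) [Fintype V] [DecidableEq V], ∀ (α : ℝ) (S : V → Finset V),
        0 < α → ValidProfile S → CheapStar α S →
        isApproxNE 2 (maxCost α) S) ∧
    (∀ β : ℝ, 1 ≤ β → β < 2 →
      ∃ (n : ℕ) (α : ℝ) (S : Fin n → Finset (Fin n)),
        0 < α ∧ ValidProfile S ∧ CheapStar α S ∧
        ¬ isApproxNE β (maxCost α) S) := by
  constructor
  · intro V _ _ α S hα hvalid hCS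
    exact part1 α S hα hvalid hCS
  · intro β hβ1 hβ2
    exact part2 β hβ1 hβ2
end

section
/- If there exists a Cheap Network (a strategy profile of the Max version that is a Max greedy equilibrium for every edge price α' with 0 < α' ≤ α) whose induced graph has diameter d, then for every β < d there exists an edge price α* > 0 such that the same profile with price α* is a Max greedy equilibrium but not a β-approximate Max Nash equilibrium. -/
open scoped Classical

lemma hub_connected {V : Type*} [Fintype V] (S : V → Finset V) (u : V)
    (h : ∀ w : V, w ≠ u → (indGraph S).Adj u w) : (indGraph S).Connected := by
  haveI : Nonempty V := ⟨u⟩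
  rw [SimpleGraph.connected_iff]
  refine ⟨fun a b => ?_, ‹Nonempty V›⟩
  have hr : ∀ a : V, (indGraph S).Reachable u a := by
    intro a
    by_cases h1 : a = u
    · subst h1; exact SimpleGraph.Reachable.refl _
    · exact (h a h1).reachable
  exact (hr a).symm.trans (hr b)

/-- If a Cheap Network has diameter `d`, then for every `β < d` there is
an edge price `α* > 0` at which the same profile is a Max greedy equilibrium but not a
`β`-approximate Max Nash equilibrium. -/
theorem cheapNetwork_diam_approx_lower_bound {V : Type*} [Fintype V] [DecidableEq V]
    (α : ℝ) (S : V → Finset V) (hS : ValidProfile S)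
    (hn : 2 ≤ Fintype.card V)
    (hcheap : CheapNetwork α S) (d : ℕ) (hd : gdiam (indGraph S) = d) :
    ∀ β : ℝ, 1 ≤ β → β < (d : ℝ) →
      ∃ αstar : ℝ, 0 < αstar ∧ isGE (maxCost αstar) S ∧
        ¬ isApproxNE β (maxCost αstar) S := by
  intro β hβ1 hβd
  classical
  set n := Fintype.card V with hncard
  have hn0 : (0:ℝ) < n := by positivity
  have hβ0 : (0:ℝ) < β := lt_of_lt_of_le one_pos hβ1
  have hdβ : (0:ℝ) < (d:ℝ) - β := by linarith
  set ε : ℝ := ((d:ℝ) - β) / (β * n) with hεdef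
  have hε0 : 0 < ε := div_pos hdβ (mul_pos hβ0 hn0)
  set αstar : ℝ := min α ε with hαdef
  have hα0 : 0 < αstar := lt_min hcheap.1 hε0
  refine ⟨αstar, hα0, hcheap.2 αstar hα0 (min_le_left _ _), ?_⟩
  -- find a vertex of eccentricity d
  haveI : Nonempty V := Fintype.card_pos_iff.mp (by omega)
  have hne : (Finset.univ : Finset (V × V)).Nonempty := Finset.univ_nonempty
  obtain ⟨p, _, hp⟩ := Finset.exists_mem_eq_sup (Finset.univ : Finset (V × V))
    hne (fun p : V × V => (indGraph S).dist p.1 p.2)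
  set u := p.1 with hu
  have hmaxd : maxDist S u = d := by
    apply le_antisymm
    · apply Finset.sup_le
      intro w _
      have h1 : (indGraph S).dist u w ≤ gdiam (indGraph S) := by
        rw [gdiam]
        exact Finset.le_sup (f := fun q : V × V => (indGraph S).dist q.1 q.2)
          (Finset.mem_univ (u, w))
      omega
    · have : (indGraph S).dist p.1 p.2 ≤ maxDist S u :=
        Finset.le_sup (Finset.mem_univ p.2)
      have hd' : d = (indGraph S).dist p.1 p.2 := by rw [← hd, gdiam, hp]
      omega
  -- the deviation
  set T : Finset V := Finset.univ.erase u with hT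
  set S' := Function.update S u T with hS'
  have hS'u : S' u = T := Function.update_self u T S
  have hadj : ∀ w : V, w ≠ u → (indGraph S').Adj u w := by
    intro w hw
    exact ⟨fun h => hw h.symm, Or.inr (by rw [hS'u, hT]; exact Finset.mem_erase.mpr ⟨hw, Finset.mem_univ w⟩)⟩
  have hconn' : (indGraph S').Connected := hub_connected S' u hadj
  have hmd' : maxDist S' u ≤ 1 := by
    apply Finset.sup_le
    intro w _
    by_cases h1 : w = u
    · subst h1; simp [SimpleGraph.dist_self]
    · have := SimpleGraph.dist_le (SimpleGraph.Walk.cons (hadj w h1) SimpleGraph.Walk.nil)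
      simpa using this
  have hcardT : (T.card : ℝ) = (n:ℝ) - 1 := by
    rw [hT, Finset.card_erase_of_mem (Finset.mem_univ u), Finset.card_univ]
    rw [← hncard]
    have : 1 ≤ n := le_trans (by norm_num) hn
    push_cast [Nat.cast_sub this]
    ring
  -- cost of deviation
  have hcost' : maxCost αstar S' u = ((αstar * ((n:ℝ)-1) + (maxDist S' u : ℝ) : ℝ) : EReal) := by
    rw [maxCost, if_pos hconn', hS'u, hcardT]
  have hRbound : β * (αstar * ((n:ℝ)-1) + (maxDist S' u : ℝ)) < (d:ℝ) := by
    have hmd'' : ((maxDist S' u : ℝ)) ≤ 1 := by exact_mod_cast hmd'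
    have hαε : αstar ≤ ε := min_le_right _ _
    have h1 : αstar * ((n:ℝ)-1) ≤ ε * ((n:ℝ)-1) := by
      apply mul_le_mul_of_nonneg_right hαε
      have : (2:ℝ) ≤ n := by exact_mod_cast hn
      linarith
    have h2 : β * (ε * ((n:ℝ)-1)) < (d:ℝ) - β := by
      rw [hεdef]
      rw [div_mul_eq_mul_div, mul_div_assoc']
      rw [div_lt_iff₀ (mul_pos hβ0 hn0)]
      have : (n:ℝ) - 1 < n := by linarith
      calc β * (((d:ℝ) - β) * ((n:ℝ)-1)) = ((d:ℝ)-β) * (β * ((n:ℝ)-1)) := by ring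
        _ < ((d:ℝ)-β) * (β * n) := by
            apply mul_lt_mul_of_pos_left _ hdβ
            exact mul_lt_mul_of_pos_left this hβ0
    nlinarith [mul_le_mul_of_nonneg_left h1 (le_of_lt hβ0),
      mul_le_mul_of_nonneg_left hmd'' (le_of_lt hβ0)]
  intro happrox
  have h := happrox u T (by rw [hT]; exact Finset.notMem_erase u _)
  rw [show Function.update S u T = S' from rfl] at h
  by_cases hconn : (indGraph S).Connected
  · rw [maxCost, if_pos hconn, hmaxd, hcost'] at h
    rw [← EReal.coe_mul] at h
    have h' : αstar * ((S u).card : ℝ) + (d:ℝ) ≤ β * (αstar * ((n:ℝ)-1) + (maxDist S' u : ℝ)) :=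
      EReal.coe_le_coe_iff.mp h
    have hnn : 0 ≤ αstar * ((S u).card : ℝ) := by positivity
    linarith
  · rw [maxCost, if_neg hconn, hcost', ← EReal.coe_mul] at h
    exact absurd h (not_le.mpr (EReal.coe_lt_top _))
end
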